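/- Let 0 < α < 1 and λ = π(1−α)/2. An open set Ω ⊆ ℂ is strongly starlike of order α if and only if Ω is both λ-spirallike and (−λ)-spirallike. -/

import Mathlib

open Metric Set

/-- The Wirtinger derivative `f_z = (f_x - i f_y)/2`. -/
noncomputable def wirtZ (f : ℂ → ℂ) (z : ℂ) : ℂ :=
  (fderiv ℝ f z 1 - Complex.I * fderiv ℝ f z Complex.I) / 2

/-- The Wirtinger derivative `f_z̄ = (f_x + i f_y)/2`. -/
noncomputable def wirtZbar (f : ℂ → ℂ) (z : ℂ) : ℂ :=
  (fderiv ℝ f z 1 + Complex.I * fderiv ℝ f z Complex.I) / 2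

/-- The Jacobian `J_f = |f_z|² - |f_z̄|²`. -/
noncomputable def Jac (f : ℂ → ℂ) (z : ℂ) : ℝ :=
  ‖wirtZ f z‖ ^ 2 - ‖wirtZbar f z‖ ^ 2

/-- The operator `Df(z) = z f_z(z) - z̄ f_z̄(z)`. -/
noncomputable def Dop (f : ℂ → ℂ) (z : ℂ) : ℂ :=
  z * wirtZ f z - (starRingEnd ℂ) z * wirtZbar f z

/-- The λ-spiral segment `[0,w]_λ = {w exp(t e^{iλ}) : t ≤ 0} ∪ {0}`. -/
def spiralSegment (l : ℝ) (w : ℂ) : Set ℂ :=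
  insert 0 {u : ℂ | ∃ t : ℝ, t ≤ 0 ∧ u = w * Complex.exp (t * Complex.exp (Complex.I * l))}

/-- A set `Ω` is λ-spirallike if it contains `[0,w]_λ` for each `w ∈ Ω`. -/
def IsSpirallike (l : ℝ) (Ω : Set ℂ) : Prop :=
  ∀ w ∈ Ω, spiralSegment l w ⊆ Ω

/-- `V_α = {0} ∪ {w ≠ 0 : |w| < exp(-tan(πα/2)·|Arg w|)}`. -/
def Vset (α : ℝ) : Set ℂ :=
  insert 0 {w : ℂ | w ≠ 0 ∧
    ‖w‖ < Real.exp (-(Real.tan (Real.pi * α / 2)) * |Complex.arg w|)}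

/-- A set `Ω` is strongly starlike of order `α` if `w₀ • V_α ⊆ Ω` for each `w₀ ∈ Ω`. -/
def StronglyStarlike (α : ℝ) (Ω : Set ℂ) : Prop :=
  ∀ w₀ ∈ Ω, ∀ v ∈ Vset α, w₀ * v ∈ Ω

/-- The class ℋ₀ of harmonic `f` on `𝔻` with `f(0)=0`, `f_z(0)=1`, described via the
decomposition `f = h + conj g` with `h, g` analytic, `h(0)=g(0)=0`, `h'(0)=1`. -/
def InH0 (f : ℂ → ℂ) : Prop :=
  ∃ h g : ℂ → ℂ, DifferentiableOn ℂ h (ball 0 1) ∧ DifferentiableOn ℂ g (ball 0 1) ∧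
    h 0 = 0 ∧ g 0 = 0 ∧ deriv h 0 = 1 ∧ ∀ z ∈ ball (0:ℂ) 1, f z = h z + (starRingEnd ℂ) (g z)

/-- Hereditarily λ-spirallike harmonic functions. -/
def InSPH (l : ℝ) (f : ℂ → ℂ) : Prop :=
  InH0 f ∧ (∀ z ∈ ball (0:ℂ) 1, 0 < Jac f z) ∧ Set.InjOn f (ball 0 1) ∧
    ∀ r : ℝ, 0 < r → r < 1 → IsSpirallike l (f '' ball 0 r)

/-- Hereditarily strongly starlike harmonic functions of order `α`. -/
def InSSH (α : ℝ) (f : ℂ → ℂ) : Prop :=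
  InH0 f ∧ (∀ z ∈ ball (0:ℂ) 1, 0 < Jac f z) ∧ Set.InjOn f (ball 0 1) ∧
    ∀ r : ℝ, 0 < r → r < 1 → StronglyStarlike α (f '' ball 0 r)


private lemma exp_smul_eq' (t l : ℝ) :
    Complex.exp ((t : ℂ) * Complex.exp (Complex.I * l)) =
      Complex.exp ((t * Real.cos l : ℝ) + (t * Real.sin l : ℝ) * Complex.I) := by
  congr 1
  rw [mul_comm Complex.I (l:ℂ), Complex.exp_mul_I]
  push_cast
  ring_nf

private lemma exp_xy_eq' (x y : ℝ) :
    Complex.exp ((x:ℂ) + (y:ℂ) * Complex.I) =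
      (Real.exp x : ℂ) * ((Real.cos y : ℂ) + (Real.sin y : ℂ) * Complex.I) := by
  rw [Complex.exp_add, Complex.exp_mul_I]
  push_cast
  ring_nf

private lemma abs_exp_xy' (x y : ℝ) :
    ‖Complex.exp ((x:ℂ) + (y:ℂ) * Complex.I)‖ = Real.exp x := by
  rw [Complex.norm_exp]
  simp

private lemma abs_arg_exp_le' (x y : ℝ) :
    |Complex.arg (Complex.exp ((x:ℂ) + (y:ℂ) * Complex.I))| ≤ |y| := by
  rcases le_or_gt Real.pi |y| with h | h
  · exact le_trans (Complex.abs_arg_le_pi _) h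
  · rw [exp_xy_eq', Complex.arg_real_mul _ (Real.exp_pos x), Complex.ofReal_cos,
      Complex.ofReal_sin,
      Complex.arg_cos_add_sin_mul_I ⟨by rw [abs_lt] at h; linarith, by rw [abs_lt] at h; linarith⟩]

private lemma SS_to_spiral' {α : ℝ} {Ω : Set ℂ} (hΩ : IsOpen Ω) (hSS : StronglyStarlike α Ω)
    (l : ℝ) (hc : 0 < Real.cos l)
    (hτ : Real.tan (Real.pi * α / 2) * |Real.sin l| = Real.cos l) :
    IsSpirallike l Ω := by
  set τ := Real.tan (Real.pi * α / 2) with hτdef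
  have hsl : Real.sin l ≠ 0 := by
    intro h0; rw [h0] at hτ; simp at hτ; linarith
  have hτpos : 0 < τ := by
    have h1 : 0 < |Real.sin l| := abs_pos.mpr hsl
    nlinarith
  intro w hw u hu
  have h0Ω : (0 : ℂ) ∈ Ω := by
    have := hSS w hw 0 (mem_insert _ _)
    simpa using this
  rcases hu with rfl | ⟨t, ht, rfl⟩
  · exact h0Ω
  · by_cases hw0 : w = 0
    · subst hw0; simpa using h0Ω
    · obtain ⟨ε, hε, hball⟩ := Metric.isOpen_iff.mp hΩ w hw
      have hwa : 0 < ‖w‖ := by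
        simpa [norm_pos_iff] using hw0
      set δ : ℝ := ε / (2 * ‖w‖) with hδdef
      have hδ : 0 < δ := by positivity
      have hwδ : w * (1 + δ) ∈ Ω := by
        apply hball
        rw [mem_ball, Complex.dist_eq]
        have : w * (1 + (δ:ℂ)) - w = w * δ := by ring
        rw [this, norm_mul, Complex.norm_real, Real.norm_eq_abs, abs_of_pos hδ, hδdef]
        have h2 : ‖w‖ * (ε / (2 * ‖w‖)) = ε / 2 := by
          field_simp
        rw [h2]; linarith
      set E : ℂ := Complex.exp ((t * Real.cos l : ℝ) + (t * Real.sin l : ℝ) * Complex.I) with hE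
      set v : ℂ := ((1+δ)⁻¹ : ℝ) * E with hv
      have hvV : v ∈ Vset α := by
        right
        constructor
        · apply mul_ne_zero
          · simp only [ne_eq, Complex.ofReal_eq_zero, inv_eq_zero]
            intro h; linarith
          · exact Complex.exp_ne_zero _
        · have hargv : Complex.arg v = Complex.arg E :=
            Complex.arg_real_mul _ (by positivity)
          have habsv : ‖v‖ = (1+δ)⁻¹ * Real.exp (t * Real.cos l) := by
            rw [hv, norm_mul, Complex.norm_real, Real.norm_eq_abs, abs_of_pos (by positivity), hE, abs_exp_xy']
          have harg : |Complex.arg E| ≤ |t * Real.sin l| := abs_arg_exp_le' _ _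
          have key : τ * |Complex.arg E| ≤ -(t * Real.cos l) := by
            have h1 : τ * |Complex.arg E| ≤ τ * |t * Real.sin l| :=
              mul_le_mul_of_nonneg_left harg hτpos.le
            have h2 : τ * |t * Real.sin l| = -(t * Real.cos l) := by
              rw [abs_mul, abs_of_nonpos ht]
              nlinarith
            linarith
          rw [hargv, habsv]
          have hlt : (1+δ)⁻¹ * Real.exp (t * Real.cos l) < Real.exp (t * Real.cos l) := by
            have := Real.exp_pos (t * Real.cos l)
            nlinarith [inv_lt_one_of_one_lt₀ (by linarith : (1:ℝ) < 1 + δ)]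
          calc (1+δ)⁻¹ * Real.exp (t * Real.cos l) < Real.exp (t * Real.cos l) := hlt
            _ ≤ Real.exp (-τ * |Complex.arg E|) := by
                apply Real.exp_le_exp.mpr; linarith
      have := hSS _ hwδ v hvV
      have heq : w * (1 + (δ:ℂ)) * v = w * Complex.exp (t * Complex.exp (Complex.I * l)) := by
        rw [hv, hE, ← exp_smul_eq']
        have h1δ : (1 + (δ:ℂ)) ≠ 0 := by
          intro h
          have := congrArg Complex.re h
          simp at this; linarith
        push_cast
        field_simp
      rwa [heq] at this

private lemma spiral_to_SS' {α : ℝ} {Ω : Set ℂ} (l : ℝ) (hs : 0 < Real.sin l)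
    (hc : 0 < Real.cos l) (hτ : Real.tan (Real.pi * α / 2) * Real.sin l = Real.cos l)
    (h1 : IsSpirallike l Ω) (h2 : IsSpirallike (-l) Ω) :
    StronglyStarlike α Ω := by
  set τ := Real.tan (Real.pi * α / 2) with hτdef
  have hτpos : 0 < τ := by nlinarith
  intro w₀ hw₀ v hv
  rcases hv with rfl | ⟨hv0, hvlt⟩
  · simpa using h1 w₀ hw₀ (mem_insert 0 _)
  · have hvpos : 0 < ‖v‖ := norm_pos_iff.mpr hv0
    set L : ℝ := Real.log ‖v‖ with hLdef
    set θ : ℝ := Complex.arg v with hθdef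
    have hL : L < -τ * |θ| := by
      have := Real.log_lt_log hvpos hvlt
      rwa [Real.log_exp] at this
    set s : ℝ := (L / Real.cos l + θ / Real.sin l) / 2 with hsdef
    set s' : ℝ := (L / Real.cos l - θ / Real.sin l) / 2 with hs'def
    have hA : L * Real.sin l < -τ * |θ| * Real.sin l := by nlinarith
    have hkey1 : L * Real.sin l + θ * Real.cos l < 0 := by
      rw [← hτ]
      have hB : θ * (τ * Real.sin l) ≤ |θ| * (τ * Real.sin l) :=
        mul_le_mul_of_nonneg_right (le_abs_self θ) (by positivity)
      nlinarith
    have hkey2 : L * Real.sin l - θ * Real.cos l < 0 := by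
      rw [← hτ]
      have hB : -(|θ| * (τ * Real.sin l)) ≤ θ * (τ * Real.sin l) := by
        have := mul_le_mul_of_nonneg_right (neg_abs_le θ) (le_of_lt (by positivity : (0:ℝ) < τ * Real.sin l))
        nlinarith
      nlinarith
    have hs0 : s ≤ 0 := by
      rw [hsdef]
      have : L / Real.cos l + θ / Real.sin l =
          (L * Real.sin l + θ * Real.cos l) / (Real.cos l * Real.sin l) := by
        field_simp
        try ring
      rw [this]
      have : (L * Real.sin l + θ * Real.cos l) / (Real.cos l * Real.sin l) ≤ 0 :=
        div_nonpos_of_nonpos_of_nonneg hkey1.le (by positivity)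
      linarith
    have hs'0 : s' ≤ 0 := by
      rw [hs'def]
      have : L / Real.cos l - θ / Real.sin l =
          (L * Real.sin l - θ * Real.cos l) / (Real.cos l * Real.sin l) := by
        field_simp
        try ring
      rw [this]
      have : (L * Real.sin l - θ * Real.cos l) / (Real.cos l * Real.sin l) ≤ 0 :=
        div_nonpos_of_nonpos_of_nonneg hkey2.le (by positivity)
      linarith
    have hsum : (s:ℂ) * Complex.exp (Complex.I * l) + (s':ℂ) * Complex.exp (Complex.I * (-l:ℝ)) =
        (L:ℂ) + (θ:ℂ) * Complex.I := by
      have e1 : (s + s') * Real.cos l = L := by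
        rw [hsdef, hs'def]; field_simp
        try ring
      have e2 : (s - s') * Real.sin l = θ := by
        rw [hsdef, hs'def]; field_simp
        try ring
      rw [mul_comm Complex.I ((l:ℝ):ℂ), Complex.exp_mul_I]
      push_cast
      rw [mul_comm Complex.I (-(l:ℂ)), Complex.exp_mul_I, Complex.cos_neg, Complex.sin_neg]
      rw [← Complex.ofReal_cos, ← Complex.ofReal_sin]
      rw [← e1, ← e2]
      push_cast
      ring
    have hveq : v = Complex.exp ((s:ℂ) * Complex.exp (Complex.I * l)) *
        Complex.exp ((s':ℂ) * Complex.exp (Complex.I * (-l:ℝ))) := by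
      rw [← Complex.exp_add, hsum]
      have := Complex.norm_mul_exp_arg_mul_I v
      rw [← this, ← hθdef]
      have habs : ((‖v‖ : ℝ) : ℂ) = Complex.exp (L:ℂ) := by
        rw [hLdef, ← Complex.ofReal_exp, Real.exp_log hvpos]
      rw [habs, ← Complex.exp_add]
    have step1 : w₀ * Complex.exp ((s:ℂ) * Complex.exp (Complex.I * l)) ∈ Ω :=
      h1 w₀ hw₀ (Or.inr ⟨s, hs0, rfl⟩)
    have step2 := h2 _ step1 (Or.inr ⟨s', hs'0, rfl⟩)
    have hfin : w₀ * Complex.exp ((s:ℂ) * Complex.exp (Complex.I * l)) *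
        Complex.exp ((s':ℂ) * Complex.exp (Complex.I * ((-l : ℝ) : ℂ))) = w₀ * v := by
      rw [hveq]; push_cast; ring
    rwa [hfin] at step2

/-- For `0 < α < 1` and `λ = π(1-α)/2`, an open set `Ω ⊆ ℂ` is strongly starlike of
order `α` iff it is both λ-spirallike and (-λ)-spirallike. -/
theorem stmt4 (α : ℝ) (hα : 0 < α) (hα1 : α < 1) (Ω : Set ℂ) (hΩ : IsOpen Ω) :
    StronglyStarlike α Ω ↔
      IsSpirallike (Real.pi * (1 - α) / 2) Ω ∧ IsSpirallike (-(Real.pi * (1 - α) / 2)) Ω := by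
  set l : ℝ := Real.pi * (1 - α) / 2 with hldef
  have hEq : l = Real.pi / 2 - Real.pi * α / 2 := by rw [hldef]; ring
  have hπ := Real.pi_pos
  have hc : Real.cos l = Real.sin (Real.pi * α / 2) := by rw [hEq, Real.cos_pi_div_two_sub]
  have hsin : Real.sin l = Real.cos (Real.pi * α / 2) := by rw [hEq, Real.sin_pi_div_two_sub]
  have hcpos : 0 < Real.cos l := by
    rw [hc]; apply Real.sin_pos_of_pos_of_lt_pi <;> nlinarith
  have hspos : 0 < Real.sin l := by
    rw [hsin]; apply Real.cos_pos_of_mem_Ioo; constructor <;> nlinarith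
  have hτ : Real.tan (Real.pi * α / 2) * Real.sin l = Real.cos l := by
    have hne : Real.cos (Real.pi * α / 2) ≠ 0 := by rw [← hsin]; exact hspos.ne'
    rw [hsin, hc, Real.tan_eq_sin_div_cos]
    field_simp
  constructor
  · intro hSS
    refine ⟨SS_to_spiral' hΩ hSS l hcpos (by rw [abs_of_pos hspos]; exact hτ), ?_⟩
    apply SS_to_spiral' hΩ hSS (-l)
    · rwa [Real.cos_neg]
    · rw [Real.sin_neg, Real.cos_neg, abs_neg, abs_of_pos hspos]; exact hτ
  · rintro ⟨h1, h2⟩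
    exact spiral_to_SS' l hspos hcpos hτ h1 h2
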